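/- arXiv:1409.0802 — 2 statements merged into one kernel-verified Lean document; each statement's English description precedes it below -/
import Mathlib

section
/- Let D be a finite 2-complex homeomorphic to a disc (a disc diagram), with vertex set V, and for each 2-cell R let e(R) be the number of exterior edges and i(R) the number of interior edges of R. Then 6 = 2·∑_{v∈V}(3 − d(v)) + ∑_{R}(6 − 2e(R) − i(R)), where d(v) is the degree of vertex v. -/
/-- Strebel's curvature formula for a disc diagram: given a planar 2-complex
homeomorphic to a disc, with vertex set `V`, 2-cells `F`, `Eext` exterior edges and
`Eint` interior edges, where Euler's formula `|V| - |E| + |F| = 1` holds, degrees sum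
to twice the number of edges, the exterior-edge counts `e R` sum to `Eext`, and the
interior-edge counts `i R` sum to `2·Eint`, we have
`6 = 2·∑_v (3 - d v) + ∑_R (6 - 2 e R - i R)`. -/
theorem stmt2 (V F : Type*) [Fintype V] [Fintype F]
    (d : V → ℕ) (e i : F → ℕ) (Eext Eint : ℕ)
    (hEuler : (Fintype.card V : ℤ) - ((Eext : ℤ) + Eint) + Fintype.card F = 1)
    (hdeg : ∑ v, (d v : ℤ) = 2 * ((Eext : ℤ) + Eint))
    (hext : ∑ R, (e R : ℤ) = Eext)
    (hint : ∑ R, (i R : ℤ) = 2 * Eint) :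
    (6 : ℤ) = 2 * ∑ v, (3 - (d v : ℤ)) + ∑ R, (6 - 2 * (e R : ℤ) - (i R : ℤ)) := by
  simp only [Finset.sum_sub_distrib, Finset.sum_const, Finset.card_univ, nsmul_eq_mul,
    ← Finset.mul_sum]
  linarith
end

section
/- Let H be a finite bipartite graph with parts L and R of equal size |T|, with no isolated vertices. If H has no perfect matching, then there exists a set W contained in L or in R with |W| = |N(W)| + 1, |W| ≥ 2, and |W| ≤ ⌈|T|/2⌉, where N(W) denotes the set of neighbours of W. -/
open scoped Classical in
/-- Key lemma: a minimum-cardinality Hall violator (across both sides) has the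
desired properties. -/
lemma stmt6_aux {L R : Type*} [Fintype L] [Fintype R] (T : ℕ)
    (hL : Fintype.card L = T) (hR : Fintype.card R = T)
    (adj : L → R → Prop) (hnoisoL : ∀ a, ∃ b, adj a b)
    (m : ℕ)
    (hmin : ∀ k, k < m →
      (∀ W : Finset L, W.card = k →
        k ≤ (W.biUnion (fun a => Finset.univ.filter (fun b => adj a b))).card) ∧
      (∀ W : Finset R, W.card = k →
        k ≤ (W.biUnion (fun b => Finset.univ.filter (fun a => adj a b))).card))
    (W : Finset L) (hWc : W.card = m)
    (hviol : (W.biUnion (fun a => Finset.univ.filter (fun b => adj a b))).card < m) :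
    2 ≤ m ∧ m ≤ (T + 1) / 2 ∧
      m = (W.biUnion (fun a => Finset.univ.filter (fun b => adj a b))).card + 1 := by
  set NW := W.biUnion (fun a => Finset.univ.filter (fun b => adj a b)) with hNW
  have hm1 : 1 ≤ m := by omega
  -- m ≥ 2
  have h2 : 2 ≤ m := by
    by_contra h
    have hm : m = 1 := by omega
    rw [hm] at hWc
    obtain ⟨a, ha⟩ := Finset.card_eq_one.mp hWc
    obtain ⟨b, hb⟩ := hnoisoL a
    have : b ∈ NW := by
      simp only [hNW, Finset.mem_biUnion, Finset.mem_filter, Finset.mem_univ, true_and]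
      exact ⟨a, by simp [ha], hb⟩
    have := Finset.card_pos.mpr ⟨b, this⟩
    omega
  -- m = |N(W)| + 1
  have hEq : m = NW.card + 1 := by
    by_contra h
    have hlt : NW.card + 1 < m := by omega
    obtain ⟨a, ha⟩ := Finset.card_pos.mp (by omega : 0 < W.card)
    have hcard : (W.erase a).card = m - 1 := by
      rw [Finset.card_erase_of_mem ha, hWc]
    have hsub : (W.erase a).biUnion (fun a => Finset.univ.filter (fun b => adj a b)) ⊆ NW :=
      Finset.biUnion_subset_biUnion_of_subset_left _ (Finset.erase_subset _ _)
    have := (hmin (m - 1) (by omega)).1 (W.erase a) hcard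
    have := Finset.card_le_card hsub
    omega
  refine ⟨h2, ?_, hEq⟩
  -- size bound
  by_contra h
  have hcontra : (T + 1) / 2 < m := by omega
  have h2m : T + 2 ≤ 2 * m := by omega
  have hmT : m ≤ T := by
    rw [← hWc, ← hL]; exact Finset.card_le_univ W
  set W' : Finset R := NWᶜ with hW'
  have hW'card : W'.card = T - (m - 1) := by
    rw [hW', Finset.card_compl, hR]
    omega
  -- neighbours of W' avoid W
  have hsub : W'.biUnion (fun b => Finset.univ.filter (fun a => adj a b)) ⊆ Wᶜ := by
    intro a ha
    simp only [Finset.mem_biUnion, Finset.mem_filter, Finset.mem_univ, true_and] at ha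
    obtain ⟨b, hb, hab⟩ := ha
    rw [Finset.mem_compl]
    intro haW
    have : b ∈ NW := by
      simp only [hNW, Finset.mem_biUnion, Finset.mem_filter, Finset.mem_univ, true_and]
      exact ⟨a, haW, hab⟩
    rw [hW', Finset.mem_compl] at hb
    exact hb this
  have hle : (W'.biUnion (fun b => Finset.univ.filter (fun a => adj a b))).card ≤ T - m := by
    have := Finset.card_le_card hsub
    rwa [Finset.card_compl, hWc, hL] at this
  have := (hmin (W'.card) (by omega)).2 W' rfl
  omega

open scoped Classical in
/-- In a finite balanced bipartite graph with parts of size `T` and no isolated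
vertices, if there is no perfect matching then (on one of the two sides) there is a
set `W` with `|W| = |N(W)| + 1`, `|W| ≥ 2` and `|W| ≤ ⌈T/2⌉`. -/
theorem stmt6 (L R : Type*) [Fintype L] [Fintype R] (T : ℕ)
    (hL : Fintype.card L = T) (hR : Fintype.card R = T)
    (adj : L → R → Prop)
    (hnoisoL : ∀ a, ∃ b, adj a b) (hnoisoR : ∀ b, ∃ a, adj a b)
    (hnopm : ¬ ∃ f : L → R, Function.Injective f ∧ ∀ a, adj a (f a)) :
    (∃ W : Finset L, 2 ≤ W.card ∧ W.card ≤ (T + 1) / 2 ∧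
      W.card = Set.ncard {b | ∃ a ∈ W, adj a b} + 1) ∨
    (∃ W : Finset R, 2 ≤ W.card ∧ W.card ≤ (T + 1) / 2 ∧
      W.card = Set.ncard {a | ∃ b ∈ W, adj a b} + 1) := by
  classical
  -- Hall's condition fails
  have hHall : ∃ s : Finset L,
      (s.biUnion (fun a => Finset.univ.filter (fun b => adj a b))).card < s.card := by
    by_contra h
    push_neg at h
    apply hnopm
    obtain ⟨f, hf, hf2⟩ :=
      (Finset.all_card_le_biUnion_card_iff_exists_injective
        (fun a : L => Finset.univ.filter (fun b => adj a b))).mp h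
    refine ⟨f, hf, fun a => ?_⟩
    have := hf2 a
    simpa using this
  -- minimal violating cardinality over both sides
  have hQ : ∃ k, (∃ W : Finset L, W.card = k ∧
        (W.biUnion (fun a => Finset.univ.filter (fun b => adj a b))).card < k) ∨
      (∃ W : Finset R, W.card = k ∧
        (W.biUnion (fun b => Finset.univ.filter (fun a => adj a b))).card < k) := by
    obtain ⟨s, hs⟩ := hHall
    exact ⟨s.card, Or.inl ⟨s, rfl, hs⟩⟩
  set m := Nat.find hQ with hm
  have hmin : ∀ k, k < m →
      (∀ W : Finset L, W.card = k →
        k ≤ (W.biUnion (fun a => Finset.univ.filter (fun b => adj a b))).card) ∧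
      (∀ W : Finset R, W.card = k →
        k ≤ (W.biUnion (fun b => Finset.univ.filter (fun a => adj a b))).card) := by
    intro k hk
    have := Nat.find_min hQ hk
    push_neg at this
    constructor
    · intro W hW
      have := this.1 W hW
      omega
    · intro W hW
      have := this.2 W hW
      omega
  rcases Nat.find_spec hQ with ⟨W, hWc, hviol⟩ | ⟨W, hWc, hviol⟩
  · left
    obtain ⟨h2, hbd, heq⟩ := stmt6_aux T hL hR adj hnoisoL m hmin W hWc hviol
    refine ⟨W, by omega, by omega, ?_⟩
    have hset : {b | ∃ a ∈ W, adj a b} =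
        ↑(W.biUnion (fun a => Finset.univ.filter (fun b => adj a b))) := by
      ext b
      simp
    rw [hset, Set.ncard_coe_finset]
    omega
  · right
    obtain ⟨h2, hbd, heq⟩ := stmt6_aux T hR hL (fun b a => adj a b) hnoisoR m
      (fun k hk => ⟨(hmin k hk).2, (hmin k hk).1⟩) W hWc hviol
    refine ⟨W, by omega, by omega, ?_⟩
    have hset : {a | ∃ b ∈ W, adj a b} =
        ↑(W.biUnion (fun b => Finset.univ.filter (fun a => adj a b))) := by
      ext a
      simp
    rw [hset, Set.ncard_coe_finset]
    omega
end
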